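/- Let X1 and X2 be regular (T3) topological spaces and let ⟨X1,H1⟩ and ⟨X2,H2⟩ be local movement systems, and let φ: H1 → H2 be a group isomorphism. Then there exists a unique Boolean algebra isomorphism ψ: RO(X1) → RO(X2) such that φ(f)^RO = ψ ∘ f^RO ∘ ψ⁻¹ for every f ∈ H1; equivalently, for every U, V ∈ RO(X1) and f ∈ H1, V = f(U) if and only if ψ(V) = φ(f)(ψ(U)). -/

import Mathlib

open Topology

namespace Recon1

variable {X Y : Type*} [TopologicalSpace X] [TopologicalSpace Y]

instance homeoGroup (X : Type*) [TopologicalSpace X] : Group (X ≃ₜ X) where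
  mul f g := g.trans f
  one := Homeomorph.refl X
  inv := Homeomorph.symm
  mul_assoc _ _ _ := Homeomorph.ext fun _ => rfl
  one_mul _ := Homeomorph.ext fun _ => rfl
  mul_one _ := Homeomorph.ext fun _ => rfl
  inv_mul_cancel f := Homeomorph.ext fun x => f.symm_apply_apply x

/-- carr(h) = {x : h x ≠ x}. -/
def carr (h : X ≃ₜ X) : Set X := {x | h x ≠ x}

/-- supp(h) = cl(carr h). -/
def supp (h : X ≃ₜ X) : Set X := closure (carr h)

/-- var(h) = int(supp h). -/
def varSet (h : X ≃ₜ X) : Set X := interior (supp h)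

/-- The type of regular open subsets of a topological space. -/
structure RegularOpens (X : Type*) [TopologicalSpace X] where
  carrier : Set X
  regular' : interior (closure carrier) = carrier

instance : SetLike (RegularOpens X) X where
  coe := RegularOpens.carrier
  coe_injective := fun a b h => by cases a; cases b; congr

instance : PartialOrder (RegularOpens X) := .ofSetLike (RegularOpens X) X

/-- The image of a regular open set under a homeomorphism, as a regular open set.
This realizes the Boolean algebra isomorphism `f^RO : RO(X) → RO(Y)` induced by a
homeomorphism `f : X ≃ₜ Y`. -/
def roImage (f : X ≃ₜ Y) (U : RegularOpens X) : RegularOpens Y :=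
  ⟨f '' U.carrier, by
    rw [← Homeomorph.image_closure, ← Homeomorph.image_interior, U.regular']⟩

/-- `⟨X, H⟩` is a local movement system if every nonempty regular open set contains the
"variation" of some nontrivial element of `H`. -/
def LocalMovementSystem (H : Subgroup (X ≃ₜ X)) : Prop :=
  ∀ U : RegularOpens X, (U : Set X).Nonempty →
    ∃ f ∈ H, f ≠ 1 ∧ varSet f ⊆ (U : Set X)

/-! ### Generic topology helpers -/

lemma intCl_idem (A : Set X) :
    interior (closure (interior (closure A))) = interior (closure A) := by
  apply subset_antisymm
  · calc interior (closure (interior (closure A)))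
        ⊆ interior (closure (closure A)) :=
          interior_mono (closure_mono interior_subset)
      _ = interior (closure A) := by rw [closure_closure]
  · exact interior_maximal subset_closure isOpen_interior

/-- A nonempty open set contained in the closure of `D` meets `D`. -/
lemma open_meets {Q D : Set X} (hQ : IsOpen Q) (hQD : Q ⊆ closure D)
    (hne : Q.Nonempty) : (Q ∩ D).Nonempty := by
  obtain ⟨x, hx⟩ := hne
  have := mem_closure_iff.mp (hQD hx) Q hQ hx
  exact this

/-- Disjoint open sets have disjoint `interior ∘ closure`. -/
lemma disjoint_intCl {A B : Set X} (hA : IsOpen A) (hB : IsOpen B)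
    (h : Disjoint A B) : Disjoint (interior (closure A)) (interior (closure B)) := by
  rw [Set.disjoint_iff_inter_eq_empty] at h ⊢
  by_contra hne
  rw [← Set.not_nonempty_iff_eq_empty] at hne
  push_neg at hne
  -- the open set interior (closure A) ∩ interior (closure B) meets B, and then A
  have h1 : (interior (closure A) ∩ interior (closure B) ∩ B).Nonempty := by
    apply open_meets (isOpen_interior.inter isOpen_interior)
      ((Set.inter_subset_right).trans interior_subset) hne
  obtain ⟨y, hy⟩ := h1
  have h2 : ((interior (closure A) ∩ B) ∩ A).Nonempty := by
    apply open_meets (isOpen_interior.inter hB)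
      ((Set.inter_subset_left).trans interior_subset)
    exact ⟨y, ⟨hy.1.1, hy.2⟩⟩
  obtain ⟨z, hz⟩ := h2
  have : z ∈ A ∩ B := ⟨hz.2, hz.1.2⟩
  rw [h] at this
  exact this

/-- An open set disjoint from `B` is disjoint from `interior (closure B)`. -/
lemma disjoint_intCl_right {A B : Set X} (hA : IsOpen A) (h : Disjoint A B) :
    Disjoint A (interior (closure B)) := by
  rw [Set.disjoint_iff_inter_eq_empty] at h ⊢
  by_contra hne
  rw [← Set.not_nonempty_iff_eq_empty] at hne
  push_neg at hne
  have h1 : ((A ∩ interior (closure B)) ∩ B).Nonempty :=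
    open_meets (hA.inter isOpen_interior)
      ((Set.inter_subset_right).trans interior_subset) hne
  obtain ⟨y, hy⟩ := h1
  have : y ∈ A ∩ B := ⟨hy.1.1, hy.2⟩
  rw [h] at this
  exact this

/-- An open subset of the closure of a regular open set is a subset of it. -/
lemma open_subset_of_subset_closure {A : Set X} {U : Set X}
    (hA : IsOpen A) (hreg : interior (closure U) = U) (h : A ⊆ closure U) : A ⊆ U := by
  rw [← hreg]
  exact interior_maximal h hA


/-! ### The homeomorphism group: pointwise lemmas -/

@[simp] lemma hg_mul_apply (f g : X ≃ₜ X) (x : X) : (f * g) x = f (g x) := rfl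
@[simp] lemma hg_one_apply (x : X) : (1 : X ≃ₜ X) x = x := rfl
@[simp] lemma hg_inv_apply (f : X ≃ₜ X) (x : X) : f⁻¹ x = f.symm x := rfl

lemma hg_pow_apply (f : X ≃ₜ X) (n : ℕ) (x : X) : (f ^ n) x = f^[n] x := by
  induction n with
  | zero => simp
  | succ n ih => rw [pow_succ', Function.iterate_succ']; simp [ih]

lemma hg_ext_iff {f g : X ≃ₜ X} : f = g ↔ ∀ x, f x = g x :=
  ⟨fun h x => by rw [h], Homeomorph.ext⟩

lemma commute_iff_pointwise {f g : X ≃ₜ X} : Commute f g ↔ ∀ x, f (g x) = g (f x) := by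
  unfold Commute SemiconjBy
  rw [hg_ext_iff]
  simp

/-! ### Carrier calculus -/

lemma mem_carr {f : X ≃ₜ X} {x : X} : x ∈ carr f ↔ f x ≠ x := Iff.rfl

lemma not_mem_carr {f : X ≃ₜ X} {x : X} : x ∉ carr f ↔ f x = x := by
  simp [mem_carr]

lemma carr_eq_empty_iff {f : X ≃ₜ X} : carr f = ∅ ↔ f = 1 := by
  rw [Set.eq_empty_iff_forall_notMem, hg_ext_iff]
  simp [not_mem_carr]

lemma carr_one : carr (1 : X ≃ₜ X) = ∅ := carr_eq_empty_iff.mpr rfl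

lemma carr_nonempty_iff {f : X ≃ₜ X} : (carr f).Nonempty ↔ f ≠ 1 := by
  rw [Set.nonempty_iff_ne_empty, not_iff_not, carr_eq_empty_iff]

lemma isOpen_carr [T2Space X] (f : X ≃ₜ X) : IsOpen (carr f) := by
  have : IsClosed {x | f x = x} := isClosed_eq f.continuous continuous_id
  have h2 : carr f = {x | f x = x}ᶜ := by ext x; simp [mem_carr]
  rw [h2]
  exact this.isOpen_compl

lemma carr_inv (f : X ≃ₜ X) : carr f⁻¹ = carr f := by
  ext x
  simp only [mem_carr, hg_inv_apply]
  constructor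
  · intro h h2
    have h3 : f.symm (f x) = x := f.symm_apply_apply x
    rw [h2] at h3; exact h h3
  · intro h h2
    have h3 : f (f.symm x) = x := f.apply_symm_apply x
    rw [h2] at h3; exact h h3
lemma apply_mem_carr {f : X ≃ₜ X} {x : X} (hx : x ∈ carr f) : f x ∈ carr f := by
  rw [mem_carr] at hx ⊢
  intro h
  exact hx (f.injective h)

lemma image_carr (f : X ≃ₜ X) : f '' carr f = carr f := by
  apply subset_antisymm
  · rintro _ ⟨x, hx, rfl⟩; exact apply_mem_carr hx
  · intro x hx
    refine ⟨f.symm x, ?_, f.apply_symm_apply x⟩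
    rw [mem_carr, f.apply_symm_apply]
    intro h
    rw [mem_carr] at hx
    apply hx
    conv_lhs => rw [h]
    exact f.apply_symm_apply x

lemma carr_mul_subset (f g : X ≃ₜ X) : carr (f * g) ⊆ carr f ∪ carr g := by
  intro x hx
  rw [mem_carr, hg_mul_apply] at hx
  by_cases h : g x = x
  · left; rw [mem_carr]; rw [h] at hx; exact hx
  · right; exact h

lemma carr_pow_subset (f : X ≃ₜ X) (n : ℕ) : carr (f ^ n) ⊆ carr f := by
  induction n with
  | zero => simp [pow_zero, carr_one]
  | succ n ih =>
    rw [pow_succ]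
    exact (carr_mul_subset _ _).trans (by rw [Set.union_subset_iff]; exact ⟨ih, subset_rfl⟩)

lemma carr_conj (f g : X ≃ₜ X) : carr (f * g * f⁻¹) = f '' carr g := by
  ext x
  simp only [mem_carr, hg_mul_apply, hg_inv_apply]
  constructor
  · intro h
    refine ⟨f.symm x, ?_, f.apply_symm_apply x⟩
    rw [mem_carr]
    intro h2
    exact h (by rw [h2, f.apply_symm_apply])
  · rintro ⟨y, hy, rfl⟩
    rw [f.symm_apply_apply]
    rw [mem_carr] at hy
    exact fun h2 => hy (f.injective h2)

lemma fixes_of_not_mem_carr {f : X ≃ₜ X} {x : X} (h : x ∉ carr f) : f x = x :=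
  not_mem_carr.mp h

lemma commute_of_disjoint_carr {f g : X ≃ₜ X} (h : Disjoint (carr f) (carr g)) :
    Commute f g := by
  rw [commute_iff_pointwise]
  intro x
  rw [Set.disjoint_iff_inter_eq_empty] at h
  by_cases hf : x ∈ carr f
  · have hg : x ∉ carr g := fun hg => absurd (h ▸ Set.mem_inter hf hg) (Set.notMem_empty x)
    rw [fixes_of_not_mem_carr hg]
    have : f x ∈ carr f := apply_mem_carr hf
    have hg2 : f x ∉ carr g := fun hg2 => absurd (h ▸ Set.mem_inter this hg2) (Set.notMem_empty _)
    rw [fixes_of_not_mem_carr hg2]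
  · by_cases hg : x ∈ carr g
    · have hf2 : g x ∉ carr f := by
        intro hf2
        exact absurd (h ▸ Set.mem_inter hf2 (apply_mem_carr hg)) (Set.notMem_empty _)
      rw [fixes_of_not_mem_carr hf2, fixes_of_not_mem_carr hf]
    · simp [fixes_of_not_mem_carr hf, fixes_of_not_mem_carr hg]

/-- If `f` maps `N` off itself and `g ≠ 1` is carried by `N`, then `f` and `g` do not commute. -/
lemma not_commute_of_displaced {f g : X ≃ₜ X} {N : Set X}
    (hd : Disjoint (f '' N) N) (hc : carr g ⊆ N) (hg : g ≠ 1) : ¬ Commute f g := by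
  intro hcomm
  have h1 : f * g * f⁻¹ = g := by
    have := hcomm.eq
    calc f * g * f⁻¹ = g * f * f⁻¹ := by rw [this]
    _ = g := by group
  have h2 : f '' carr g = carr g := by rw [← carr_conj, h1]
  obtain ⟨x, hx⟩ := carr_nonempty_iff.mpr hg
  have hx2 : x ∈ f '' carr g := h2.symm ▸ hx
  have hx3 : x ∈ f '' N := Set.image_mono (f := f) hc hx2
  exact (Set.disjoint_left.mp hd hx3) (hc hx)
/-! ### varSet calculus -/

lemma varSet_regular (f : X ≃ₜ X) : interior (closure (varSet f)) = varSet f := by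
  unfold varSet supp
  rw [← closure_closure (s := carr f)]
  exact intCl_idem _

lemma isOpen_varSet (f : X ≃ₜ X) : IsOpen (varSet f) := isOpen_interior

lemma carr_subset_varSet [T2Space X] (f : X ≃ₜ X) : carr f ⊆ varSet f :=
  interior_maximal subset_closure (isOpen_carr f)

lemma varSet_one : varSet (1 : X ≃ₜ X) = ∅ := by
  unfold varSet supp
  rw [carr_one]
  simp

lemma varSet_nonempty_iff [T2Space X] {f : X ≃ₜ X} : (varSet f).Nonempty ↔ f ≠ 1 := by
  constructor
  · intro ⟨x, hx⟩
    intro h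
    rw [h, varSet_one] at hx
    exact hx
  · intro h
    obtain ⟨x, hx⟩ := carr_nonempty_iff.mpr h
    exact ⟨x, carr_subset_varSet f hx⟩

lemma varSet_subset_of_carr_subset {f : X ≃ₜ X} {U : Set X}
    (hreg : interior (closure U) = U) (h : carr f ⊆ U) : varSet f ⊆ U := by
  rw [← hreg]
  exact interior_mono (closure_mono h)

lemma disjoint_varSet_of_disjoint_carr [T2Space X] {f g : X ≃ₜ X}
    (h : Disjoint (carr f) (carr g)) : Disjoint (varSet f) (varSet g) :=
  disjoint_intCl (isOpen_carr f) (isOpen_carr g) h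

lemma commute_of_disjoint_varSet [T2Space X] {f g : X ≃ₜ X}
    (h : Disjoint (varSet f) (varSet g)) : Commute f g :=
  commute_of_disjoint_carr (h.mono (carr_subset_varSet f) (carr_subset_varSet g))

lemma disjoint_varSet_iff_disjoint_carr [T2Space X] {f g : X ≃ₜ X} :
    Disjoint (varSet f) (varSet g) ↔ Disjoint (carr f) (carr g) :=
  ⟨fun h => h.mono (carr_subset_varSet f) (carr_subset_varSet g),
   disjoint_varSet_of_disjoint_carr⟩

lemma image_closure' (f : X ≃ₜ X) (A : Set X) : f '' closure A = closure (f '' A) :=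
  (Homeomorph.image_closure f A)

lemma varSet_conj (f g : X ≃ₜ X) : varSet (f * g * f⁻¹) = f '' varSet g := by
  unfold varSet supp
  rw [carr_conj, ← Homeomorph.image_closure, ← Homeomorph.image_interior]

/-- nonempty open subsets of `varSet f` meet `carr f`. -/
lemma open_subset_varSet_meets_carr {f : X ≃ₜ X} {A : Set X} (hA : IsOpen A)
    (hsub : A ⊆ varSet f) (hne : A.Nonempty) : (A ∩ carr f).Nonempty :=
  open_meets hA (hsub.trans interior_subset) hne

/-! ### Regular open sets: helpers -/

lemma RegularOpens.coe_mk (s : Set X) (h : interior (closure s) = s) :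
    ((⟨s, h⟩ : RegularOpens X) : Set X) = s := rfl

lemma RegularOpens.regular (U : RegularOpens X) :
    interior (closure (U : Set X)) = (U : Set X) := U.regular'

lemma RegularOpens.isOpen (U : RegularOpens X) : IsOpen (U : Set X) := by
  rw [← U.regular]; exact isOpen_interior

lemma RegularOpens.ext' {U V : RegularOpens X} (h : (U : Set X) = V) : U = V :=
  SetLike.coe_injective h

lemma RegularOpens.le_iff {U V : RegularOpens X} : U ≤ V ↔ (U : Set X) ⊆ V := Iff.rfl

/-- intersection of regular opens is regular open -/
lemma RegularOpens.inter_regular (U V : RegularOpens X) :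
    interior (closure ((U : Set X) ∩ V)) = (U : Set X) ∩ V := by
  apply subset_antisymm
  · intro x hx
    have h1 : x ∈ interior (closure (U : Set X)) := by
      apply interior_mono (closure_mono Set.inter_subset_left) hx
    have h2 : x ∈ interior (closure (V : Set X)) := by
      apply interior_mono (closure_mono Set.inter_subset_right) hx
    rw [U.regular] at h1
    rw [V.regular] at h2
    exact ⟨h1, h2⟩
  · exact interior_maximal subset_closure (U.isOpen.inter V.isOpen)

def roInf (U V : RegularOpens X) : RegularOpens X := ⟨(U : Set X) ∩ V, RegularOpens.inter_regular U V⟩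

def roBot : RegularOpens X := ⟨∅, by simp⟩

lemma roBot_le (U : RegularOpens X) : roBot ≤ U := by
  rw [RegularOpens.le_iff]; exact Set.empty_subset _

def varRO [T2Space X] (f : X ≃ₜ X) : RegularOpens X := ⟨varSet f, varSet_regular f⟩

/-- For an open set `A` and regular open `U`, if `A ⊄ U` then `A \ closure U` is nonempty. -/
lemma open_diff_closure_nonempty {A : Set X} {U : RegularOpens X} (hA : IsOpen A)
    (h : ¬ A ⊆ (U : Set X)) : (A ∩ (closure (U : Set X))ᶜ).Nonempty := by
  by_contra hc
  rw [Set.not_nonempty_iff_eq_empty, ← Set.disjoint_iff_inter_eq_empty,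
    Set.disjoint_compl_right_iff_subset] at hc
  exact h (open_subset_of_subset_closure hA U.regular hc)
/-! ### Shrinking lemmas (T3) -/

lemma exists_RO_nbhd [T3Space X] {W : Set X} (hW : IsOpen W) {x : X} (hx : x ∈ W) :
    ∃ N : RegularOpens X, x ∈ (N : Set X) ∧ (N : Set X) ⊆ W := by
  obtain ⟨C, hC, hCc, hCW⟩ := exists_mem_nhds_isClosed_subset (hW.mem_nhds hx)
  refine ⟨⟨interior (closure (interior C)), intCl_idem _⟩, ?_, ?_⟩
  · rw [RegularOpens.coe_mk]
    exact interior_maximal subset_closure isOpen_interior (mem_interior_iff_mem_nhds.mpr hC)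
  · rw [RegularOpens.coe_mk]
    calc interior (closure (interior C)) ⊆ closure (interior C) := interior_subset
    _ ⊆ closure C := closure_mono interior_subset
    _ = C := hCc.closure_eq
    _ ⊆ W := hCW

lemma shrink_displaced [T3Space X] (f : X ≃ₜ X) {x : X} (hfx : f x ≠ x)
    {W : Set X} (hW : IsOpen W) (hxW : x ∈ W) :
    ∃ N : RegularOpens X, x ∈ (N : Set X) ∧ (N : Set X) ⊆ W ∧
      Disjoint (f '' (N : Set X)) (N : Set X) := by
  obtain ⟨u, v, hu, hv, hxu, hfxv, huv⟩ := t2_separation (Ne.symm hfx)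
  have hW' : IsOpen (W ∩ u ∩ f ⁻¹' v) := (hW.inter hu).inter (f.continuous.isOpen_preimage v hv)
  have hxW' : x ∈ W ∩ u ∩ f ⁻¹' v := ⟨⟨hxW, hxu⟩, by simpa using hfxv⟩
  obtain ⟨N, hxN, hNsub⟩ := exists_RO_nbhd hW' hxW'
  refine ⟨N, hxN, hNsub.trans (Set.inter_subset_left.trans Set.inter_subset_left), ?_⟩
  have h1 : f '' (N : Set X) ⊆ v := by
    rintro _ ⟨y, hy, rfl⟩
    exact hNsub hy |>.2
  have h2 : (N : Set X) ⊆ u := fun y hy => (hNsub hy).1.2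
  exact (huv.symm.mono h1 h2)

lemma shrink_displaced_list [T3Space X] (L : List (X ≃ₜ X)) {x : X}
    (h : ∀ f ∈ L, f x ≠ x) {W : Set X} (hW : IsOpen W) (hxW : x ∈ W) :
    ∃ N : RegularOpens X, x ∈ (N : Set X) ∧ (N : Set X) ⊆ W ∧
      ∀ f ∈ L, Disjoint (f '' (N : Set X)) (N : Set X) := by
  induction L with
  | nil =>
    obtain ⟨N, h1, h2⟩ := exists_RO_nbhd hW hxW
    exact ⟨N, h1, h2, by simp⟩
  | cons f L ih =>
    obtain ⟨N, hxN, hNW, hL⟩ := ih (fun g hg => h g (List.mem_cons_of_mem f hg))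
    obtain ⟨N', hxN', hN'N, hdisp⟩ :=
      shrink_displaced f (h f (List.mem_cons_self)) N.isOpen hxN
    refine ⟨N', hxN', hN'N.trans hNW, ?_⟩
    intro g hg
    rcases List.mem_cons.mp hg with rfl | hg
    · exact hdisp
    · exact (hL g hg).mono (Set.image_mono (f := g) hN'N) hN'N

/-! ### Subgroup element conveniences -/

variable {H : Subgroup (X ≃ₜ X)}

lemma coe_commute_iff {a b : ↥H} : Commute (a : X ≃ₜ X) (b : X ≃ₜ X) ↔ Commute a b := by
  unfold Commute SemiconjBy
  rw [← Subgroup.coe_mul, ← Subgroup.coe_mul]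
  exact ⟨fun h => Subtype.ext h, fun h => congrArg _ h⟩

lemma coe_ne_one_iff {a : ↥H} : (a : X ≃ₜ X) ≠ 1 ↔ a ≠ 1 := by
  rw [ne_eq, ne_eq, OneMemClass.coe_eq_one]

lemma locMove [T3Space X] (hH : LocalMovementSystem H) {P : RegularOpens X}
    (hP : (P : Set X).Nonempty) :
    ∃ g : ↥H, g ≠ 1 ∧ varSet (g : X ≃ₜ X) ⊆ (P : Set X) := by
  obtain ⟨f, hfH, hf1, hfvar⟩ := hH P hP
  exact ⟨⟨f, hfH⟩, coe_ne_one_iff.mp hf1, hfvar⟩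

lemma locMoveCarr [T3Space X] (hH : LocalMovementSystem H) {P : RegularOpens X}
    (hP : (P : Set X).Nonempty) :
    ∃ g : ↥H, g ≠ 1 ∧ carr (g : X ≃ₜ X) ⊆ (P : Set X) := by
  obtain ⟨g, h1, h2⟩ := locMove hH hP
  exact ⟨g, h1, (carr_subset_varSet _).trans h2⟩
/-! ### Existence of elements of large order -/

lemma coe_pow' {H : Subgroup (X ≃ₜ X)} (g : ↥H) (m : ℕ) :
    ((g ^ m : ↥H) : X ≃ₜ X) = (g : X ≃ₜ X) ^ m := by
  induction m with
  | zero => simp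
  | succ m ih => rw [pow_succ, pow_succ, Subgroup.coe_mul, ih]

/-- In a local movement system, every nonempty regular open set carries an element whose
 orbit at some point has length `> n`. -/
lemma exists_long_orbit [T3Space X] {H : Subgroup (X ≃ₜ X)} (hH : LocalMovementSystem H)
    {P : RegularOpens X} (hP : (P : Set X).Nonempty) (n : ℕ) :
    ∃ (g : ↥H) (V : RegularOpens X), carr (g : X ≃ₜ X) ⊆ (P : Set X) ∧
      (V : Set X).Nonempty ∧ (V : Set X) ⊆ (P : Set X) ∧
      ∀ m, 1 ≤ m → m ≤ n → Disjoint ((((g : X ≃ₜ X)) ^ m) '' (V : Set X)) (V : Set X) := by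
  induction n with
  | zero =>
    exact ⟨1, P, by simp [carr_one], hP, subset_rfl, fun m h1 h2 => absurd (h1.trans h2) (by omega)⟩
  | succ n ih =>
    obtain ⟨g, V, hgP, hVne, hVP, hdis⟩ := ih
    set γ := (g : X ≃ₜ X) with hγ
    by_cases hcase : ∃ q ∈ (V : Set X), (γ ^ (n+1)) q ≠ q
    · obtain ⟨q, hqV, hq⟩ := hcase
      have hmoves : ∀ f ∈ (List.range (n+1)).map (fun m => γ ^ (m+1)), f q ≠ q := by
        intro f hf
        simp only [List.mem_map, List.mem_range] at hf
        obtain ⟨m, hm, rfl⟩ := hf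
        rcases Nat.lt_or_ge m n with hmn | hmn
        · intro heq
          have : q ∈ ((γ ^ (m+1)) '' (V : Set X)) ∩ (V : Set X) :=
            ⟨⟨q, hqV, heq⟩, hqV⟩
          exact (Set.disjoint_iff_inter_eq_empty.mp (hdis (m+1) (by omega) (by omega))).subset
            this
        · have : m = n := by omega
          subst this
          exact hq
      obtain ⟨N, hqN, hNV, hNdis⟩ := shrink_displaced_list _ hmoves V.isOpen hqV
      refine ⟨g, N, hgP, ⟨q, hqN⟩, hNV.trans hVP, ?_⟩
      intro m h1 h2
      have : γ ^ m ∈ (List.range (n+1)).map (fun m => γ ^ (m+1)) := by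
        simp only [List.mem_map, List.mem_range]
        exact ⟨m - 1, by omega, by congr 1; omega⟩
      exact hNdis _ this
    · push_neg at hcase
      obtain ⟨y, hy1, hycarr⟩ := locMoveCarr hH hVne
      set υ := (y : X ≃ₜ X) with hυ
      obtain ⟨q, hqc⟩ := carr_nonempty_iff.mpr (coe_ne_one_iff.mpr hy1)
      have hqV : q ∈ (V : Set X) := hycarr hqc
      set q' := υ q with hq'
      have hq'c : q' ∈ carr υ := apply_mem_carr hqc
      have hq'V : q' ∈ (V : Set X) := hycarr hq'c
      have hne : q' ≠ q := hqc
      set δ := ((g * y : ↥H) : X ≃ₜ X) with hδ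
      have hδapp : ∀ z, δ z = γ (υ z) := by
        intro z
        rw [hδ, Subgroup.coe_mul, hg_mul_apply]
      have key : ∀ k, 1 ≤ k → k ≤ n + 1 → (δ ^ k) q = (γ ^ k) q' := by
        intro k
        induction k with
        | zero => omega
        | succ k ihk =>
          intro _ hk
          rcases Nat.eq_zero_or_pos k with rfl | hkpos
          · simp [hδapp, hq']
          · rw [pow_succ', hg_mul_apply, ihk hkpos (by omega), hδapp]
            have hfix : υ ((γ ^ k) q') = (γ ^ k) q' := by
              apply fixes_of_not_mem_carr
              intro hmem
              have h1 : (γ ^ k) q' ∈ (γ ^ k) '' (V : Set X) := ⟨q', hq'V, rfl⟩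
              exact (Set.disjoint_left.mp ((hdis k hkpos (by omega)).symm.mono hycarr
                (Set.Subset.refl _))) hmem h1
            rw [hfix, ← hg_mul_apply γ (γ^k), ← pow_succ']
      have hmoves : ∀ f ∈ (List.range (n+1)).map (fun m => δ ^ (m+1)), f q ≠ q := by
        intro f hf
        simp only [List.mem_map, List.mem_range] at hf
        obtain ⟨m, hm, rfl⟩ := hf
        rw [key (m+1) (by omega) (by omega)]
        rcases Nat.lt_or_ge m n with hmn | hmn
        · intro heq
          have h1 : (γ ^ (m+1)) q' ∈ (γ ^ (m+1)) '' (V : Set X) := ⟨q', hq'V, rfl⟩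
          rw [heq] at h1
          exact (Set.disjoint_left.mp (hdis (m+1) (by omega) (by omega))) h1 hqV
        · have : m = n := by omega
          subst this
          rw [hcase q' hq'V]
          exact hne
      obtain ⟨N, hqN, hNV, hNdis⟩ := shrink_displaced_list _ hmoves V.isOpen hqV
      refine ⟨g * y, N, ?_, ⟨q, hqN⟩, hNV.trans hVP, ?_⟩
      · rw [Subgroup.coe_mul]
        refine (carr_mul_subset _ _).trans ?_
        rw [Set.union_subset_iff]
        exact ⟨hgP, (hycarr.trans hVP)⟩
      · intro m h1 h2
        have : δ ^ m ∈ (List.range (n+1)).map (fun m => δ ^ (m+1)) := by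
          simp only [List.mem_map, List.mem_range]
          exact ⟨m - 1, by omega, by congr 1; omega⟩
        exact hNdis _ this

/-- Key torsion lemma: every nonempty regular open carries an element with `g ^ 12 ≠ 1`. -/
lemma exists_pow12_ne_one [T3Space X] {H : Subgroup (X ≃ₜ X)} (hH : LocalMovementSystem H)
    {P : RegularOpens X} (hP : (P : Set X).Nonempty) :
    ∃ g : ↥H, carr (g : X ≃ₜ X) ⊆ (P : Set X) ∧ g ^ 12 ≠ 1 := by
  obtain ⟨g, V, hgP, ⟨q, hqV⟩, hVP, hdis⟩ := exists_long_orbit hH hP 12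
  refine ⟨g, hgP, ?_⟩
  intro h12
  set γ := (g : X ≃ₜ X) with hγ
  have h1 : (γ ^ 12) q = q := by
    have h0 : ((g ^ 12 : ↥H) : X ≃ₜ X) = 1 := by rw [h12]; simp
    rw [coe_pow'] at h0
    rw [← hγ] at h0
    rw [h0, hg_one_apply]
  have h2 : (γ ^ 12) q ∈ (⇑(γ ^ 12)) '' (V : Set X) := ⟨q, hqV, rfl⟩
  rw [h1] at h2
  exact (Set.disjoint_left.mp (hdis 12 (by omega) (by omega))) h2 hqV
/-! ### Algebraic disjointness -/

open scoped commutatorElement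

/-- Rubin's algebraic disjointness: a purely group-theoretic relation. -/
def AlgDisj {G : Type*} [Group G] (f g : G) : Prop :=
  ∀ h : G, ¬Commute f h → ∃ a b : G,
    Commute a g ∧ Commute b g ∧ Commute ⁅a, ⁅b, h⁆⁆ g ∧ ⁅a, ⁅b, h⁆⁆ ≠ 1

/-- Membership in the algebraic centralizer of `f`. -/
def InAC {G : Type*} [Group G] (f x : G) : Prop :=
  ∀ h : G, AlgDisj f h → Commute x (h ^ 12)

/-- The group-theoretic disjointness relation. -/
def GDisj {G : Type*} [Group G] (f g : G) : Prop :=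
  ∀ x : G, InAC f x → InAC g x → x = 1

lemma carr_commutator_subset (u v : X ≃ₜ X) :
    carr ⁅u, v⁆ ⊆ carr u ∪ v '' carr u := by
  have h : ⁅u, v⁆ = u * (v * u⁻¹ * v⁻¹) := by
    rw [commutatorElement_def]; group
  rw [h]
  refine (carr_mul_subset _ _).trans ?_
  apply Set.union_subset_union_right
  have h2 : v * u⁻¹ * v⁻¹ = v * u⁻¹ * v⁻¹ := rfl
  rw [show v * u⁻¹ * v⁻¹ = v * u⁻¹ * v⁻¹ from rfl]
  rw [carr_conj v u⁻¹, carr_inv]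

lemma carr_commutator_subset' (u v : X ≃ₜ X) :
    carr ⁅u, v⁆ ⊆ u '' carr v ∪ carr v := by
  have h : ⁅u, v⁆ = (u * v * u⁻¹) * v⁻¹ := by
    rw [commutatorElement_def]
  rw [h]
  refine (carr_mul_subset _ _).trans ?_
  rw [carr_conj, carr_inv]

lemma image_eq_self_of_carr_subset {f : X ≃ₜ X} {N : Set X} (h : carr f ⊆ N) :
    f '' N = N := by
  apply subset_antisymm
  · rintro _ ⟨z, hz, rfl⟩
    by_cases hc : z ∈ carr f
    · exact h (apply_mem_carr hc)
    · rw [fixes_of_not_mem_carr hc]; exact hz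
  · intro z hz
    refine ⟨f⁻¹ z, ?_, f.apply_symm_apply z⟩
    by_cases hc : z ∈ carr f⁻¹
    · have h2 := apply_mem_carr hc
      rw [carr_inv] at h2
      exact h h2
    · rw [fixes_of_not_mem_carr hc]
      exact hz

lemma commutator_apply_of_displaced {b h : X ≃ₜ X} {N : Set X}
    (hd : Disjoint (h '' N) N) (hb : carr b ⊆ N) {z : X} (hz : z ∈ N) :
    ⁅b, h⁆ z = b z := by
  rw [commutatorElement_def]
  rw [hg_mul_apply, hg_mul_apply, hg_mul_apply]
  have h1 : h⁻¹ z ∉ N := by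
    intro hmem
    have : z ∈ h '' N := ⟨h⁻¹ z, hmem, h.apply_symm_apply z⟩
    exact (Set.disjoint_left.mp hd this) hz
  have h2 : b⁻¹ (h⁻¹ z) = h⁻¹ z := by
    apply fixes_of_not_mem_carr
    rw [carr_inv]
    exact fun hc => h1 (hb hc)
  rw [h2]
  have h3 : h (h⁻¹ z) = z := h.apply_symm_apply z
  rw [h3]

lemma coe_commutator {H : Subgroup (X ≃ₜ X)} (a b : ↥H) :
    ((⁅a, b⁆ : ↥H) : X ≃ₜ X) = ⁅(a : X ≃ₜ X), (b : X ≃ₜ X)⁆ :=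
  map_commutatorElement H.subtype a b

/-- Rubin's Proposition, part 1: disjoint supports imply algebraic disjointness. -/
lemma algDisj_of_disjoint [T3Space X] {H : Subgroup (X ≃ₜ X)} (hH : LocalMovementSystem H)
    {f g : ↥H} (hdisj : Disjoint (varSet (f : X ≃ₜ X)) (varSet (g : X ≃ₜ X))) :
    AlgDisj f g := by
  intro h hcomm
  have hcomm' : ¬Commute (f : X ≃ₜ X) (h : X ≃ₜ X) := fun hc => hcomm (coe_commute_iff.mp hc)
  -- there is a point moved by both f and h
  have hne : (carr (f : X ≃ₜ X) ∩ carr (h : X ≃ₜ X)).Nonempty := by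
    rw [Set.nonempty_iff_ne_empty]
    intro hempty
    exact hcomm' (commute_of_disjoint_carr (Set.disjoint_iff_inter_eq_empty.mpr hempty))
  obtain ⟨x, hxf, hxh⟩ := hne
  -- shrink: N ⊆ carr f displaced by h
  obtain ⟨N, hxN, hNf, hNdisp⟩ :=
    shrink_displaced (h : X ≃ₜ X) hxh (isOpen_carr (f : X ≃ₜ X)) hxf
  -- f₂ carried in N
  obtain ⟨f₂, hf₂1, hf₂carr⟩ := locMoveCarr hH ⟨x, hxN⟩
  set j : ↥H := ⁅f₂, h⁆ with hj
  have hjapp : ∀ z ∈ (N : Set X), (j : X ≃ₜ X) z = (f₂ : X ≃ₜ X) z := by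
    intro z hz
    rw [hj, coe_commutator]
    exact commutator_apply_of_displaced hNdisp hf₂carr hz
  -- x₂ moved by f₂, shrink inside N
  obtain ⟨x₂, hx₂⟩ := carr_nonempty_iff.mpr (coe_ne_one_iff.mpr hf₂1)
  obtain ⟨N₂, hx₂N₂, hN₂N, hN₂disp⟩ :=
    shrink_displaced (f₂ : X ≃ₜ X) hx₂ N.isOpen (hf₂carr hx₂)
  obtain ⟨f₁, hf₁1, hf₁carr⟩ := locMoveCarr hH ⟨x₂, hx₂N₂⟩
  have hNvf : (N : Set X) ⊆ varSet (f : X ≃ₜ X) := hNf.trans (carr_subset_varSet _)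
  have hcommute_of_carr_in_N : ∀ u : ↥H, carr (u : X ≃ₜ X) ⊆ (N : Set X) → Commute u g := by
    intro u hu
    apply coe_commute_iff.mp
    apply commute_of_disjoint_carr
    exact hdisj.mono (hu.trans hNvf) (carr_subset_varSet _)
  have hjN : ∀ z ∈ (N : Set X), (j : X ≃ₜ X) z ∈ (N : Set X) := by
    intro z hz
    rw [hjapp z hz]
    have himg : (f₂ : X ≃ₜ X) '' (N : Set X) = (N : Set X) :=
      image_eq_self_of_carr_subset hf₂carr
    rw [← himg]
    exact ⟨z, hz, rfl⟩
  refine ⟨f₁, f₂, ?_, ?_, ?_, ?_⟩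
  · exact hcommute_of_carr_in_N f₁ (hf₁carr.trans hN₂N)
  · exact hcommute_of_carr_in_N f₂ hf₂carr
  · -- the double commutator commutes with g
    apply hcommute_of_carr_in_N
    rw [coe_commutator, coe_commutator]
    refine (carr_commutator_subset _ _).trans ?_
    rw [Set.union_subset_iff]
    constructor
    · exact hf₁carr.trans hN₂N
    · rintro _ ⟨z, hz, rfl⟩
      rw [← coe_commutator]
      exact hjN z (hN₂N (hf₁carr hz))
  · -- the double commutator is nontrivial
    rw [ne_eq, commutatorElement_eq_one_iff_commute]
    intro hcomm2
    have hc2 : Commute (j : X ≃ₜ X) (f₁ : X ≃ₜ X) := (coe_commute_iff.mpr hcomm2).symm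
    have himg : (j : X ≃ₜ X) '' (N₂ : Set X) = (f₂ : X ≃ₜ X) '' (N₂ : Set X) :=
      Set.image_congr (fun z hz => hjapp z (hN₂N hz))
    refine not_commute_of_displaced (f := (j : X ≃ₜ X)) (N := (N₂ : Set X)) ?_ hf₁carr
      (coe_ne_one_iff.mpr hf₁1) hc2
    rw [himg]
    exact hN₂disp
lemma carr_image_of_commute {p q : X ≃ₜ X} (h : Commute p q) : q '' carr p = carr p := by
  conv_rhs => rw [show p = q * p * q⁻¹ by rw [← h.eq]; group]
  rw [carr_conj]

lemma image_swap {p q : X ≃ₜ X} (h : Commute p q) (S : Set X) :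
    p '' (q '' S) = q '' (p '' S) := by
  rw [← Set.image_comp, ← Set.image_comp]
  apply congrFun
  apply congrArg
  funext z
  exact commute_iff_pointwise.mp h z

/-- Rubin's Proposition, part 2: algebraic disjointness forces `g ^ 12` to move no point
 moved by `f`. -/
lemma disjoint_carr_pow12_of_algDisj [T3Space X] {H : Subgroup (X ≃ₜ X)}
    (hH : LocalMovementSystem H) {f g : ↥H} (had : AlgDisj f g) :
    Disjoint (carr (f : X ≃ₜ X)) (carr ((g : X ≃ₜ X) ^ 12)) := by
  set γ := (g : X ≃ₜ X) with hγ
  rw [Set.disjoint_iff_inter_eq_empty]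
  by_contra hne
  rw [← Set.not_nonempty_iff_eq_empty, not_not] at hne
  obtain ⟨x, hxf, hx12⟩ := hne
  -- the first five iterates of x under γ are distinct from x
  have hdist : ∀ m, 1 ≤ m → m ≤ 4 → (γ ^ m) x ≠ x := by
    intro m h1 h4 heq
    apply hx12
    have hk : ∀ k, (γ ^ (m * k)) x = x := by
      intro k
      induction k with
      | zero => simp
      | succ k ih => rw [Nat.mul_succ, pow_add, hg_mul_apply, heq, ih]
    have h12 : 12 = m * (12 / m) := by interval_cases m <;> norm_num
    rw [h12]
    exact hk _
  -- shrink a regular open around x displaced by f and by γ, γ², γ³, γ⁴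
  have hmoves : ∀ p ∈ ((f : X ≃ₜ X) :: (List.range 4).map (fun m => γ ^ (m+1)) : List (X ≃ₜ X)), p x ≠ x := by
    intro p hp
    rcases List.mem_cons.mp hp with rfl | hp
    · exact hxf
    · simp only [List.mem_map, List.mem_range] at hp
      obtain ⟨m, hm, rfl⟩ := hp
      exact hdist (m+1) (by omega) (by omega)
  obtain ⟨N, hxN, -, hdispL⟩ := shrink_displaced_list _ hmoves isOpen_univ (Set.mem_univ x)
  have hdispf : Disjoint ((f : X ≃ₜ X) '' (N : Set X)) (N : Set X) :=
    hdispL _ (List.mem_cons_self)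
  have hdispm : ∀ m, 1 ≤ m → m ≤ 4 → Disjoint (⇑(γ ^ m) '' (N : Set X)) (N : Set X) := by
    intro m h1 h4
    apply hdispL
    apply List.mem_cons_of_mem
    simp only [List.mem_map, List.mem_range]
    exact ⟨m - 1, by omega, by congr 1; omega⟩
  -- a nontrivial element carried in N does not commute with f
  obtain ⟨h, hh1, hhcarr⟩ := locMoveCarr hH ⟨x, hxN⟩
  have hnc : ¬Commute f h := by
    intro hc
    exact not_commute_of_displaced hdispf hhcarr (coe_ne_one_iff.mpr hh1)
      (coe_commute_iff.mpr hc)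
  obtain ⟨a, b, hag, hbg, hkg, hk1⟩ := had h hnc
  set α := (a : X ≃ₜ X)
  set β := (b : X ≃ₜ X)
  set η := (h : X ≃ₜ X)
  set κ := ((⁅a, ⁅b, h⁆⁆ : ↥H) : X ≃ₜ X) with hκdef
  have hκ : κ = ⁅α, ⁅β, η⁆⁆ := by rw [hκdef, coe_commutator, coe_commutator]
  -- support bound for κ
  set w : Fin 4 → (X ≃ₜ X) := ![α * β, α, β, 1] with hw
  have hcover : carr κ ⊆ ⋃ t : Fin 4, (w t) '' (N : Set X) := by
    rw [hκ]
    refine (carr_commutator_subset' _ _).trans ?_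
    have hinner : carr ⁅β, η⁆ ⊆ β '' (N : Set X) ∪ (N : Set X) := by
      refine (carr_commutator_subset' _ _).trans ?_
      exact Set.union_subset_union (Set.image_mono (f := β) hhcarr) hhcarr
    intro z hz
    rcases hz with hz | hz
    · obtain ⟨y, hy, rfl⟩ := hz
      rcases hinner hy with hy2 | hy2
      · obtain ⟨v, hv, rfl⟩ := hy2
        exact Set.mem_iUnion.mpr ⟨0, ⟨v, hv, rfl⟩⟩
      · exact Set.mem_iUnion.mpr ⟨1, ⟨y, hy2, rfl⟩⟩
    · rcases hinner hz with hz2 | hz2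
      · exact Set.mem_iUnion.mpr ⟨2, hz2⟩
      · exact Set.mem_iUnion.mpr ⟨3, ⟨z, hz2, by simp [hw]⟩⟩
  -- κ is nontrivial; pick a moved point c
  obtain ⟨c, hc⟩ := carr_nonempty_iff.mpr (coe_ne_one_iff.mpr hk1)
  -- w t commutes with γ
  have hwγ : ∀ t : Fin 4, Commute (w t) γ := by
    intro t
    fin_cases t
    · exact (coe_commute_iff.mpr hag).mul_left (coe_commute_iff.mpr hbg)
    · exact coe_commute_iff.mpr hag
    · exact coe_commute_iff.mpr hbg
    · exact Commute.one_left γ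
  -- for each i, c lies in some w t '' (γ^i '' N)
  have hmem : ∀ i : Fin 5, ∃ t : Fin 4, c ∈ (w t) '' (⇑(γ ^ (i : ℕ)) '' (N : Set X)) := by
    intro i
    have hcom : Commute κ (γ ^ (i : ℕ)) := (coe_commute_iff.mpr hkg).pow_right _
    have hcκ : c ∈ ⇑(γ ^ (i : ℕ)) '' carr κ := by
      rw [carr_image_of_commute hcom]
      exact hc
    have : c ∈ ⇑(γ ^ (i : ℕ)) '' (⋃ t : Fin 4, (w t) '' (N : Set X)) :=
      Set.image_mono hcover hcκ
    rw [Set.image_iUnion] at this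
    obtain ⟨t, ht⟩ := Set.mem_iUnion.mp this
    refine ⟨t, ?_⟩
    rwa [image_swap ((hwγ t).pow_right _).symm] at ht
  choose u hu using hmem
  -- pigeonhole
  obtain ⟨i, i', hne', huu⟩ := Fintype.exists_ne_map_eq_of_card_lt u (by norm_num)
  have key : ∀ (i i' : Fin 5), (i : ℕ) < (i' : ℕ) → u i = u i' → False := by
    intro i i' hlt huu
    obtain ⟨p, hp, hpc⟩ := hu i
    obtain ⟨p', hp', hpc'⟩ := hu i'
    rw [← hpc'] at hpc
    have hpp : p = p' := (w (u i')).injective (by rw [huu] at hpc; exact hpc)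
    subst hpp
    obtain ⟨z, hz, hzp⟩ := hp
    obtain ⟨z', hz', hzp'⟩ := hp'
    rw [← hzp'] at hzp
    have hsplit : (i' : ℕ) = (i : ℕ) + ((i' : ℕ) - (i : ℕ)) := by omega
    rw [hsplit, pow_add, hg_mul_apply] at hzp
    have hzz : z = (γ ^ ((i' : ℕ) - (i : ℕ))) z' := (γ ^ (i : ℕ)).injective hzp
    have hmem2 : z ∈ ⇑(γ ^ ((i' : ℕ) - (i : ℕ))) '' (N : Set X) := ⟨z', hz', hzz.symm⟩
    exact (Set.disjoint_left.mp (hdispm _ (by omega) (by omega))) hmem2 hz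
  rcases Nat.lt_or_ge (i : ℕ) (i' : ℕ) with hlt | hge
  · exact key i i' hlt huu
  · rcases Nat.lt_or_ge (i' : ℕ) (i : ℕ) with hlt' | hge'
    · exact key i' i hlt' huu.symm
    · exact hne' (Fin.ext (by omega))
lemma compl_closure_regular {U : Set X} (hU : IsOpen U) :
    interior (closure (closure U)ᶜ) = (closure U)ᶜ := by
  rw [closure_compl, interior_compl]
  congr 1
  apply subset_antisymm
  · calc closure (interior (closure U)) ⊆ closure (closure U) :=
      closure_mono interior_subset
    _ = closure U := closure_closure
  · exact closure_mono (interior_maximal subset_closure hU)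

/-- The algebraic centralizer of `f` is the rigid stabilizer of `varSet f`. -/
theorem inAC_iff [T3Space X] {H : Subgroup (X ≃ₜ X)} (hH : LocalMovementSystem H)
    (f x : ↥H) : InAC f x ↔ varSet (x : X ≃ₜ X) ⊆ varSet (f : X ≃ₜ X) := by
  constructor
  · intro hx
    by_contra hns
    -- W := varSet x \ closure (varSet f) is open and nonempty, and meets carr x
    set W := varSet (x : X ≃ₜ X) ∩ (closure (varSet (f : X ≃ₜ X)))ᶜ with hW
    have hWopen : IsOpen W := (isOpen_varSet _).inter isClosed_closure.isOpen_compl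
    have hWne : W.Nonempty :=
      open_diff_closure_nonempty (U := varRO (f : X ≃ₜ X)) (isOpen_varSet _) hns
    obtain ⟨x₀, hx₀W, hx₀c⟩ := open_subset_varSet_meets_carr hWopen
      Set.inter_subset_left hWne
    obtain ⟨N, hx₀N, hNW, hNdisp⟩ := shrink_displaced (x : X ≃ₜ X) hx₀c hWopen hx₀W
    obtain ⟨h, hhcarr, hh12⟩ := exists_pow12_ne_one hH ⟨x₀, hx₀N⟩
    have hvarh : varSet (h : X ≃ₜ X) ⊆ (closure (varSet (f : X ≃ₜ X)))ᶜ := by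
      apply varSet_subset_of_carr_subset (compl_closure_regular (isOpen_varSet _))
      exact hhcarr.trans (hNW.trans Set.inter_subset_right)
    have had : AlgDisj f h := by
      apply algDisj_of_disjoint hH
      apply Set.disjoint_left.mpr
      intro z hz hz2
      exact hvarh hz2 (subset_closure hz)
    have hcomm := hx h had
    have hnc : ¬Commute (x : X ≃ₜ X) ((h ^ 12 : ↥H) : X ≃ₜ X) := by
      apply not_commute_of_displaced hNdisp
      · rw [coe_pow']
        exact (carr_pow_subset _ _).trans hhcarr
      · exact coe_ne_one_iff.mpr hh12
    exact hnc (coe_commute_iff.mpr hcomm)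
  · intro hsub h had
    have hd := disjoint_carr_pow12_of_algDisj hH had
    apply coe_commute_iff.mp
    apply commute_of_disjoint_carr
    have h1 : carr ((x : ↥H) : X ≃ₜ X) ⊆ varSet (f : X ≃ₜ X) :=
      (carr_subset_varSet _).trans hsub
    have h2 : carr (((h ^ 12 : ↥H)) : X ≃ₜ X) = carr ((h : X ≃ₜ X) ^ 12) := by
      rw [coe_pow']
    rw [h2]
    have hd2 : Disjoint (varSet (f : X ≃ₜ X)) (varSet ((h : X ≃ₜ X) ^ 12)) :=
      disjoint_varSet_of_disjoint_carr hd
    exact (hd2.mono_right (carr_subset_varSet _)).mono_left h1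

/-- The group-theoretic disjointness relation captures disjointness of supports. -/
theorem gdisj_iff [T3Space X] {H : Subgroup (X ≃ₜ X)} (hH : LocalMovementSystem H)
    (f g : ↥H) : GDisj f g ↔ Disjoint (varSet (f : X ≃ₜ X)) (varSet (g : X ≃ₜ X)) := by
  constructor
  · intro hgd
    by_contra hnd
    have hne : (varSet (f : X ≃ₜ X) ∩ varSet (g : X ≃ₜ X)).Nonempty := by
      rw [Set.nonempty_iff_ne_empty]
      intro hemp
      exact hnd (Set.disjoint_iff_inter_eq_empty.mpr hemp)
    obtain ⟨z, hz1, hz2⟩ := locMove hH (P := roInf (varRO (f : X ≃ₜ X)) (varRO (g : X ≃ₜ X))) hne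
    apply hz1
    apply hgd z
    · exact (inAC_iff hH f z).mpr (hz2.trans Set.inter_subset_left)
    · exact (inAC_iff hH g z).mpr (hz2.trans Set.inter_subset_right)
  · intro hd z h1 h2
    have hv1 := (inAC_iff hH f z).mp h1
    have hv2 := (inAC_iff hH g z).mp h2
    have : carr (z : X ≃ₜ X) = ∅ := by
      rw [Set.eq_empty_iff_forall_notMem]
      intro p hp
      exact (Set.disjoint_left.mp hd (hv1 (carr_subset_varSet _ hp)))
        (hv2 (carr_subset_varSet _ hp))
    exact OneMemClass.coe_eq_one.mp (carr_eq_empty_iff.mp this)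
/-! ### Transport along group isomorphisms -/

section Transport

variable {G₁ G₂ : Type*} [Group G₁] [Group G₂]

lemma commute_map_iff (φ : G₁ ≃* G₂) {a b : G₁} : Commute (φ a) (φ b) ↔ Commute a b := by
  constructor
  · intro h
    have h2 := h.map φ.symm.toMonoidHom
    simpa using h2
  · intro h
    exact h.map φ.toMonoidHom

lemma algDisj_map_forward (φ : G₁ ≃* G₂) {f g : G₁} (had : AlgDisj f g) :
    AlgDisj (φ f) (φ g) := by
  intro h hcomm
  have hcomm₀ : ¬Commute f (φ.symm h) := by
    intro hc
    apply hcomm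
    have := (commute_map_iff φ).mpr hc
    simpa using this
  obtain ⟨a, b, hag, hbg, hkg, hk1⟩ := had (φ.symm h) hcomm₀
  refine ⟨φ a, φ b, (commute_map_iff φ).mpr hag, (commute_map_iff φ).mpr hbg, ?_, ?_⟩
  · have : ⁅φ a, ⁅φ b, h⁆⁆ = φ ⁅a, ⁅b, φ.symm h⁆⁆ := by
      rw [map_commutatorElement, map_commutatorElement, MulEquiv.apply_symm_apply]
    rw [this]
    exact (commute_map_iff φ).mpr hkg
  · have : ⁅φ a, ⁅φ b, h⁆⁆ = φ ⁅a, ⁅b, φ.symm h⁆⁆ := by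
      rw [map_commutatorElement, map_commutatorElement, MulEquiv.apply_symm_apply]
    rw [this]
    intro hone
    exact hk1 (by simpa using (φ.injective (by simpa using hone)))

lemma algDisj_map (φ : G₁ ≃* G₂) {f g : G₁} : AlgDisj (φ f) (φ g) ↔ AlgDisj f g := by
  constructor
  · intro h
    have := algDisj_map_forward φ.symm h
    simpa using this
  · exact algDisj_map_forward φ

lemma inAC_map (φ : G₁ ≃* G₂) {f x : G₁} : InAC (φ f) (φ x) ↔ InAC f x := by
  constructor
  · intro h k hk
    have h2 := h (φ k) ((algDisj_map φ).mpr hk)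
    rw [← map_pow] at h2
    exact (commute_map_iff φ).mp h2
  · intro h k hk
    have hk' : AlgDisj f (φ.symm k) := by
      have := (algDisj_map φ.symm).mpr hk
      simpa using this
    have h2 := (commute_map_iff φ).mpr (h (φ.symm k) hk')
    rw [map_pow, MulEquiv.apply_symm_apply] at h2
    exact h2

lemma gdisj_map (φ : G₁ ≃* G₂) {f g : G₁} : GDisj (φ f) (φ g) ↔ GDisj f g := by
  constructor
  · intro h x h1 h2
    have := h (φ x) ((inAC_map φ).mpr h1) ((inAC_map φ).mpr h2)
    exact φ.injective (by simpa using this)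
  · intro h x h1 h2
    have h1' : InAC f (φ.symm x) := by
      apply (inAC_map (f := f) (x := φ.symm x) φ).mp
      rwa [MulEquiv.apply_symm_apply]
    have h2' : InAC g (φ.symm x) := by
      apply (inAC_map (f := g) (x := φ.symm x) φ).mp
      rwa [MulEquiv.apply_symm_apply]
    have := h (φ.symm x) h1' h2'
    have h3 := congrArg φ this
    simpa using h3

end Transport
/-! ### The induced map on regular open sets -/

/-- Density: every regular open set is the regularization of the union of supports of
 the elements of `H` carried inside it. -/
lemma varUnion_eq [T3Space X] {H : Subgroup (X ≃ₜ X)} (hH : LocalMovementSystem H)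
    (U : RegularOpens X) :
    interior (closure (⋃ (g : ↥H) (_ : varSet (g : X ≃ₜ X) ⊆ (U : Set X)),
      varSet (g : X ≃ₜ X))) = (U : Set X) := by
  set D := ⋃ (g : ↥H) (_ : varSet (g : X ≃ₜ X) ⊆ (U : Set X)), varSet (g : X ≃ₜ X) with hD
  have hDU : D ⊆ (U : Set X) := by
    apply Set.iUnion_subset
    intro g
    apply Set.iUnion_subset
    intro hg
    exact hg
  apply subset_antisymm
  · calc interior (closure D) ⊆ interior (closure (U : Set X)) :=
      interior_mono (closure_mono hDU)
    _ = (U : Set X) := U.regular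
  · apply interior_maximal ?_ U.isOpen
    intro x hx
    rw [mem_closure_iff]
    intro Q hQ hxQ
    obtain ⟨P, hxP, hPsub⟩ := exists_RO_nbhd (hQ.inter U.isOpen) ⟨hxQ, hx⟩
    obtain ⟨g, hg1, hgvar⟩ := locMove hH ⟨x, hxP⟩
    obtain ⟨y, hy⟩ := varSet_nonempty_iff.mpr (coe_ne_one_iff.mpr hg1)
    refine ⟨y, (hPsub (hgvar hy)).1, ?_⟩
    have hgU : varSet (g : X ≃ₜ X) ⊆ (U : Set X) := hgvar.trans (fun z hz => (hPsub hz).2)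
    exact Set.mem_iUnion.mpr ⟨g, Set.mem_iUnion.mpr ⟨hgU, hy⟩⟩

section Construction

variable {X₁ X₂ : Type*} [TopologicalSpace X₁] [TopologicalSpace X₂]
  [T3Space X₁] [T3Space X₂]
  {H₁ : Subgroup (X₁ ≃ₜ X₁)} {H₂ : Subgroup (X₂ ≃ₜ X₂)}

/-- The underlying set of the induced map on regular opens. -/
def PsiSet (φ : ↥H₁ ≃* ↥H₂) (U : RegularOpens X₁) : Set X₂ :=
  interior (closure (⋃ (g : ↥H₁) (_ : varSet (g : X₁ ≃ₜ X₁) ⊆ (U : Set X₁)),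
    varSet ((φ g : ↥H₂) : X₂ ≃ₜ X₂)))

/-- The induced map on regular opens. -/
def Psi (φ : ↥H₁ ≃* ↥H₂) (U : RegularOpens X₁) : RegularOpens X₂ :=
  ⟨PsiSet φ U, intCl_idem _⟩

lemma Psi_coe (φ : ↥H₁ ≃* ↥H₂) (U : RegularOpens X₁) :
    ((Psi φ U : RegularOpens X₂) : Set X₂) = PsiSet φ U := rfl

lemma var_phi_subset_Psi (φ : ↥H₁ ≃* ↥H₂) {U : RegularOpens X₁} {g : ↥H₁}
    (hg : varSet (g : X₁ ≃ₜ X₁) ⊆ (U : Set X₁)) :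
    varSet ((φ g : ↥H₂) : X₂ ≃ₜ X₂) ⊆ PsiSet φ U := by
  apply interior_maximal ?_ (isOpen_varSet _)
  refine Set.Subset.trans ?_ subset_closure
  exact Set.subset_iUnion₂ (s := fun g _ => varSet ((φ g : ↥H₂) : X₂ ≃ₜ X₂)) g hg

lemma disjoint_varSet_map (h₁ : LocalMovementSystem H₁) (h₂ : LocalMovementSystem H₂)
    (φ : ↥H₁ ≃* ↥H₂) (f g : ↥H₁) :
    Disjoint (varSet ((φ f : ↥H₂) : X₂ ≃ₜ X₂)) (varSet ((φ g : ↥H₂) : X₂ ≃ₜ X₂)) ↔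
      Disjoint (varSet ((f : ↥H₁) : X₁ ≃ₜ X₁)) (varSet ((g : ↥H₁) : X₁ ≃ₜ X₁)) := by
  rw [← gdisj_iff h₂, ← gdisj_iff h₁, gdisj_map]

/-- The fundamental transfer property. -/
lemma subset_Psi_iff (h₁ : LocalMovementSystem H₁) (h₂ : LocalMovementSystem H₂)
    (φ : ↥H₁ ≃* ↥H₂) {U : RegularOpens X₁} (h : ↥H₁) :
    varSet ((φ h : ↥H₂) : X₂ ≃ₜ X₂) ⊆ PsiSet φ U ↔
      varSet ((h : ↥H₁) : X₁ ≃ₜ X₁) ⊆ (U : Set X₁) := by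
  constructor
  · intro hsub
    by_contra hns
    set W := varSet ((h : ↥H₁) : X₁ ≃ₜ X₁) ∩ (closure (U : Set X₁))ᶜ with hW
    have hWopen : IsOpen W := (isOpen_varSet _).inter isClosed_closure.isOpen_compl
    have hWne : W.Nonempty := open_diff_closure_nonempty (isOpen_varSet _) hns
    obtain ⟨x, hxW⟩ := hWne
    obtain ⟨P, hxP, hPW⟩ := exists_RO_nbhd hWopen hxW
    obtain ⟨k, hk1, hkvar⟩ := locMove h₁ ⟨x, hxP⟩
    have hkW : varSet ((k : ↥H₁) : X₁ ≃ₜ X₁) ⊆ W := hkvar.trans hPW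
    -- φ k is disjoint from every generator of PsiSet φ U
    have hdkg : ∀ g : ↥H₁, varSet ((g : ↥H₁) : X₁ ≃ₜ X₁) ⊆ (U : Set X₁) →
        Disjoint (varSet ((φ k : ↥H₂) : X₂ ≃ₜ X₂)) (varSet ((φ g : ↥H₂) : X₂ ≃ₜ X₂)) := by
      intro g hg
      rw [disjoint_varSet_map h₁ h₂]
      apply Set.disjoint_left.mpr
      intro z hz hz2
      exact (hkW hz).2 (subset_closure (hg hz2))
    have hdisj : Disjoint (varSet ((φ k : ↥H₂) : X₂ ≃ₜ X₂)) (PsiSet φ U) := by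
      apply disjoint_intCl_right (isOpen_varSet _)
      rw [Set.disjoint_iUnion_right]
      intro g
      rw [Set.disjoint_iUnion_right]
      intro hg
      exact hdkg g hg
    -- but φ k overlaps φ h
    have hnd1 : ¬ Disjoint (varSet ((k : ↥H₁) : X₁ ≃ₜ X₁)) (varSet ((h : ↥H₁) : X₁ ≃ₜ X₁)) := by
      obtain ⟨y, hy⟩ := varSet_nonempty_iff.mpr (coe_ne_one_iff.mpr hk1)
      exact Set.not_disjoint_iff.mpr ⟨y, hy, (hkW hy).1⟩
    have hnd2 : ¬ Disjoint (varSet ((φ k : ↥H₂) : X₂ ≃ₜ X₂))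
        (varSet ((φ h : ↥H₂) : X₂ ≃ₜ X₂)) := by
      intro hd
      exact hnd1 ((disjoint_varSet_map h₁ h₂ φ k h).mp hd)
    obtain ⟨z, hz1, hz2⟩ := Set.not_disjoint_iff.mp hnd2
    exact (Set.disjoint_left.mp hdisj hz1) (hsub hz2)
  · exact var_phi_subset_Psi φ

end Construction
section Construction2

lemma inv_image_image (p : X ≃ₜ X) (S : Set X) : (p⁻¹ : X ≃ₜ X) '' (p '' S) = S := by
  rw [← Set.image_comp]
  have : ((p⁻¹ : X ≃ₜ X) : X → X) ∘ (p : X → X) = id := by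
    funext z
    exact p.symm_apply_apply z
  rw [this, Set.image_id]

lemma image_intCl (p : X ≃ₜ Y) (S : Set X) :
    p '' interior (closure S) = interior (closure (p '' S)) := by
  rw [← Homeomorph.image_closure, ← Homeomorph.image_interior]

lemma roImage_coe (p : X ≃ₜ Y) (U : RegularOpens X) :
    ((roImage p U : RegularOpens Y) : Set Y) = p '' (U : Set X) := rfl

variable {X₁ X₂ : Type*} [TopologicalSpace X₁] [TopologicalSpace X₂]
  [T3Space X₁] [T3Space X₂]
  {H₁ : Subgroup (X₁ ≃ₜ X₁)} {H₂ : Subgroup (X₂ ≃ₜ X₂)}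

lemma Psi_symm_Psi (h₁ : LocalMovementSystem H₁) (h₂ : LocalMovementSystem H₂)
    (φ : ↥H₁ ≃* ↥H₂) (U : RegularOpens X₁) : Psi φ.symm (Psi φ U) = U := by
  apply RegularOpens.ext'
  have hsets : (⋃ (h : ↥H₂) (_ : varSet ((h : ↥H₂) : X₂ ≃ₜ X₂) ⊆ ((Psi φ U : RegularOpens X₂) : Set X₂)),
        varSet ((φ.symm h : ↥H₁) : X₁ ≃ₜ X₁)) =
      ⋃ (g : ↥H₁) (_ : varSet ((g : ↥H₁) : X₁ ≃ₜ X₁) ⊆ (U : Set X₁)),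
        varSet ((g : ↥H₁) : X₁ ≃ₜ X₁) := by
    apply subset_antisymm
    · intro z hz
      rw [Set.mem_iUnion] at hz
      obtain ⟨h, hz⟩ := hz
      rw [Set.mem_iUnion] at hz
      obtain ⟨hcond, hz'⟩ := hz
      have hcond' : varSet ((φ (φ.symm h) : ↥H₂) : X₂ ≃ₜ X₂) ⊆ (Psi φ U : Set X₂) := by
        rwa [MulEquiv.apply_symm_apply]
      have hU : varSet ((φ.symm h : ↥H₁) : X₁ ≃ₜ X₁) ⊆ (U : Set X₁) :=
        (subset_Psi_iff h₁ h₂ φ (φ.symm h)).mp hcond'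
      exact Set.mem_iUnion.mpr ⟨φ.symm h, Set.mem_iUnion.mpr ⟨hU, hz'⟩⟩
    · intro z hz
      rw [Set.mem_iUnion] at hz
      obtain ⟨g, hz⟩ := hz
      rw [Set.mem_iUnion] at hz
      obtain ⟨hcond, hz'⟩ := hz
      refine Set.mem_iUnion.mpr ⟨φ g, Set.mem_iUnion.mpr ⟨?_, ?_⟩⟩
      · exact (subset_Psi_iff h₁ h₂ φ g).mpr hcond
      · rwa [MulEquiv.symm_apply_apply]
  show PsiSet φ.symm (Psi φ U) = (U : Set X₁)
  unfold PsiSet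
  rw [hsets]
  exact varUnion_eq h₁ U

lemma Psi_mono (φ : ↥H₁ ≃* ↥H₂) {U V : RegularOpens X₁} (h : U ≤ V) :
    Psi φ U ≤ Psi φ V := by
  rw [RegularOpens.le_iff, Psi_coe, Psi_coe]
  apply interior_mono
  apply closure_mono
  apply Set.iUnion_subset
  intro g
  apply Set.iUnion_subset
  intro hg
  exact Set.subset_iUnion₂ (s := fun g _ => varSet ((φ g : ↥H₂) : X₂ ≃ₜ X₂)) g (hg.trans h)

/-- The induced order isomorphism on regular open sets. -/
def psiIso (h₁ : LocalMovementSystem H₁) (h₂ : LocalMovementSystem H₂)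
    (φ : ↥H₁ ≃* ↥H₂) : RegularOpens X₁ ≃o RegularOpens X₂ where
  toFun := Psi φ
  invFun := Psi φ.symm
  left_inv := fun U => Psi_symm_Psi h₁ h₂ φ U
  right_inv := fun V => by
    have := Psi_symm_Psi h₂ h₁ φ.symm V
    rwa [MulEquiv.symm_symm] at this
  map_rel_iff' := by
    intro U V
    constructor
    · intro h
      simp only [Equiv.coe_fn_mk] at h
      have h2 := Psi_mono φ.symm h
      rwa [Psi_symm_Psi h₁ h₂, Psi_symm_Psi h₁ h₂] at h2
    · exact Psi_mono φ

lemma psiIso_apply (h₁ : LocalMovementSystem H₁) (h₂ : LocalMovementSystem H₂)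
    (φ : ↥H₁ ≃* ↥H₂) (U : RegularOpens X₁) : psiIso h₁ h₂ φ U = Psi φ U := rfl

/-- Equivariance of the construction. -/
lemma Psi_roImage (h₁ : LocalMovementSystem H₁) (h₂ : LocalMovementSystem H₂)
    (φ : ↥H₁ ≃* ↥H₂) (f : ↥H₁) (U : RegularOpens X₁) :
    Psi φ (roImage ((f : ↥H₁) : X₁ ≃ₜ X₁) U) =
      roImage ((φ f : ↥H₂) : X₂ ≃ₜ X₂) (Psi φ U) := by
  apply RegularOpens.ext'
  rw [roImage_coe, Psi_coe, Psi_coe]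
  unfold PsiSet
  rw [image_intCl]
  have hsets : (⋃ (g : ↥H₁) (_ : varSet ((g : ↥H₁) : X₁ ≃ₜ X₁) ⊆
        ((roImage ((f : ↥H₁) : X₁ ≃ₜ X₁) U : RegularOpens X₁) : Set X₁)),
        varSet ((φ g : ↥H₂) : X₂ ≃ₜ X₂)) =
      ((φ f : ↥H₂) : X₂ ≃ₜ X₂) ''
        (⋃ (k : ↥H₁) (_ : varSet ((k : ↥H₁) : X₁ ≃ₜ X₁) ⊆ (U : Set X₁)),
          varSet ((φ k : ↥H₂) : X₂ ≃ₜ X₂)) := by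
    apply subset_antisymm
    · intro z hz
      rw [Set.mem_iUnion] at hz
      obtain ⟨g, hz⟩ := hz
      rw [Set.mem_iUnion] at hz
      obtain ⟨hcond, hz'⟩ := hz
      set k : ↥H₁ := f⁻¹ * g * f with hk
      have hgk : g = f * k * f⁻¹ := by rw [hk]; group
      have hkU : varSet ((k : ↥H₁) : X₁ ≃ₜ X₁) ⊆ (U : Set X₁) := by
        have hcoe : ((k : ↥H₁) : X₁ ≃ₜ X₁) =
            ((f : ↥H₁) : X₁ ≃ₜ X₁)⁻¹ * ((g : ↥H₁) : X₁ ≃ₜ X₁) *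
              (((f : ↥H₁) : X₁ ≃ₜ X₁)⁻¹)⁻¹ := by
          rw [hk]
          push_cast
          group
        rw [hcoe, varSet_conj]
        rw [roImage_coe] at hcond
        have h2 := Set.image_mono (f := (((f : ↥H₁) : X₁ ≃ₜ X₁)⁻¹ : X₁ ≃ₜ X₁)) hcond
        rwa [inv_image_image] at h2
      have hφg : ((φ g : ↥H₂) : X₂ ≃ₜ X₂) =
          ((φ f : ↥H₂) : X₂ ≃ₜ X₂) * ((φ k : ↥H₂) : X₂ ≃ₜ X₂) *
            ((φ f : ↥H₂) : X₂ ≃ₜ X₂)⁻¹ := by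
        rw [hgk]
        push_cast [map_mul, map_inv]
        rfl
      rw [hφg, varSet_conj] at hz'
      obtain ⟨w, hw, rfl⟩ := hz'
      exact ⟨w, Set.mem_iUnion.mpr ⟨k, Set.mem_iUnion.mpr ⟨hkU, hw⟩⟩, rfl⟩
    · rintro _ ⟨w, hw, rfl⟩
      rw [Set.mem_iUnion] at hw
      obtain ⟨k, hw⟩ := hw
      rw [Set.mem_iUnion] at hw
      obtain ⟨hcond, hw'⟩ := hw
      set g : ↥H₁ := f * k * f⁻¹ with hg
      have hgU : varSet ((g : ↥H₁) : X₁ ≃ₜ X₁) ⊆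
          ((roImage ((f : ↥H₁) : X₁ ≃ₜ X₁) U : RegularOpens X₁) : Set X₁) := by
        have hcoe : ((g : ↥H₁) : X₁ ≃ₜ X₁) =
            ((f : ↥H₁) : X₁ ≃ₜ X₁) * ((k : ↥H₁) : X₁ ≃ₜ X₁) *
              ((f : ↥H₁) : X₁ ≃ₜ X₁)⁻¹ := by
          rw [hg]; push_cast; rfl
        rw [hcoe, varSet_conj, roImage_coe]
        exact Set.image_mono hcond
      rw [Set.mem_iUnion]
      refine ⟨g, ?_⟩
      rw [Set.mem_iUnion]
      refine ⟨hgU, ?_⟩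
      have hφg : ((φ g : ↥H₂) : X₂ ≃ₜ X₂) =
          ((φ f : ↥H₂) : X₂ ≃ₜ X₂) * ((φ k : ↥H₂) : X₂ ≃ₜ X₂) *
            ((φ f : ↥H₂) : X₂ ≃ₜ X₂)⁻¹ := by
        rw [hg]
        push_cast [map_mul, map_inv]
        rfl
      rw [hφg, varSet_conj]
      exact ⟨w, hw', rfl⟩
  rw [hsets]

end Construction2
/-! ### Uniqueness machinery -/

section Uniqueness

lemma orderIso_bot {Y' : Type*} [TopologicalSpace Y'] (e : RegularOpens X ≃o RegularOpens Y') :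
    e roBot = roBot := by
  apply le_antisymm
  · have h := e.monotone (roBot_le (e.symm roBot))
    rwa [OrderIso.apply_symm_apply] at h
  · exact roBot_le _

lemma disjoint_iff_forall_RO {P U : RegularOpens X} :
    Disjoint (P : Set X) (U : Set X) ↔
      ∀ W : RegularOpens X, W ≤ P → W ≤ U → W = roBot := by
  constructor
  · intro hd W h1 h2
    apply RegularOpens.ext'
    show (W : Set X) = ((roBot : RegularOpens X) : Set X)
    rw [show ((roBot : RegularOpens X) : Set X) = ∅ from rfl,
      Set.eq_empty_iff_forall_notMem]
    intro z hz
    exact Set.disjoint_left.mp hd (h1 hz) (h2 hz)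
  · intro h
    rw [Set.disjoint_iff_inter_eq_empty]
    by_contra hne
    rw [← Set.not_nonempty_iff_eq_empty, not_not] at hne
    obtain ⟨z, hz⟩ := hne
    have h2 := h (roInf P U) (fun y hy => hy.1) (fun y hy => hy.2)
    have h3 : z ∈ ((roInf P U : RegularOpens X) : Set X) := hz
    rw [h2] at h3
    exact h3

lemma orderIso_disjoint {Y' : Type*} [TopologicalSpace Y']
    (e : RegularOpens X ≃o RegularOpens Y') {P U : RegularOpens X} :
    Disjoint ((e P : RegularOpens Y') : Set Y') ((e U : RegularOpens Y') : Set Y') ↔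
      Disjoint (P : Set X) (U : Set X) := by
  rw [disjoint_iff_forall_RO, disjoint_iff_forall_RO]
  constructor
  · intro h W h1 h2
    have := h (e W) (e.monotone h1) (e.monotone h2)
    have h3 : W = e.symm roBot := by
      rw [← this, OrderIso.symm_apply_apply]
    rw [h3]
    have h4 := orderIso_bot e.symm
    exact h4
  · intro h W₂ h1 h2
    have h1' : e.symm W₂ ≤ P := by
      have := e.symm.monotone h1
      rwa [OrderIso.symm_apply_apply] at this
    have h2' : e.symm W₂ ≤ U := by
      have := e.symm.monotone h2
      rwa [OrderIso.symm_apply_apply] at this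
    have := h (e.symm W₂) h1' h2'
    have h3 : W₂ = e roBot := by
      rw [← this, OrderIso.apply_symm_apply]
    rw [h3, orderIso_bot e]

/-- `U` dominates the support of `f`. -/
def SmallP (f : X ≃ₜ X) (U : RegularOpens X) : Prop :=
  ∀ P : RegularOpens X, Disjoint (P : Set X) (U : Set X) → roImage f P = P

lemma isLeast_small [T3Space X] {H : Subgroup (X ≃ₜ X)} (hH : LocalMovementSystem H)
    (f : ↥H) : IsLeast {U : RegularOpens X | SmallP ((f : ↥H) : X ≃ₜ X) U}
      (varRO ((f : ↥H) : X ≃ₜ X)) := by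
  constructor
  · intro P hP
    apply RegularOpens.ext'
    rw [roImage_coe]
    have : ∀ p ∈ (P : Set X), ((f : ↥H) : X ≃ₜ X) p = p := by
      intro p hp
      apply fixes_of_not_mem_carr
      intro hc
      exact Set.disjoint_left.mp hP hp (carr_subset_varSet _ hc)
    calc ((f : ↥H) : X ≃ₜ X) '' (P : Set X) = id '' (P : Set X) := Set.image_congr this
    _ = (P : Set X) := Set.image_id _
  · intro U hU
    rw [RegularOpens.le_iff]
    by_contra hns
    have hWne : (varSet ((f : ↥H) : X ≃ₜ X) ∩ (closure (U : Set X))ᶜ).Nonempty :=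
      open_diff_closure_nonempty (isOpen_varSet _) hns
    have hWopen : IsOpen (varSet ((f : ↥H) : X ≃ₜ X) ∩ (closure (U : Set X))ᶜ) :=
      (isOpen_varSet _).inter isClosed_closure.isOpen_compl
    obtain ⟨x₀, hx₀W, hx₀c⟩ := open_subset_varSet_meets_carr hWopen Set.inter_subset_left hWne
    obtain ⟨P, hx₀P, hPW, hPdisp⟩ :=
      shrink_displaced ((f : ↥H) : X ≃ₜ X) hx₀c hWopen hx₀W
    have hPU : Disjoint (P : Set X) (U : Set X) := by
      apply Set.disjoint_left.mpr
      intro z hz hz2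
      exact (hPW hz).2 (subset_closure hz2)
    have := hU P hPU
    have himg : ((f : ↥H) : X ≃ₜ X) '' (P : Set X) = (P : Set X) := by
      rw [← roImage_coe, this]
    rw [himg] at hPdisp
    exact Set.disjoint_left.mp hPdisp hx₀P hx₀P

end Uniqueness
/-! ### LUB lemmas and the main theorem -/

lemma isLUB_varFamily [T3Space X] {H : Subgroup (X ≃ₜ X)} (hH : LocalMovementSystem H)
    (U : RegularOpens X) :
    IsLUB ((fun g : ↥H => varRO ((g : ↥H) : X ≃ₜ X)) ''
      {g : ↥H | varSet ((g : ↥H) : X ≃ₜ X) ⊆ (U : Set X)}) U := by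
  constructor
  · rintro V ⟨g, hg, rfl⟩
    exact hg
  · intro T hT
    rw [RegularOpens.le_iff]
    conv_lhs => rw [← varUnion_eq hH U]
    have hsub : (⋃ (g : ↥H) (_ : varSet ((g : ↥H) : X ≃ₜ X) ⊆ (U : Set X)),
        varSet ((g : ↥H) : X ≃ₜ X)) ⊆ (T : Set X) := by
      apply Set.iUnion_subset
      intro g
      apply Set.iUnion_subset
      intro hg
      exact hT ⟨g, hg, rfl⟩
    calc interior (closure (⋃ (g : ↥H) (_ : varSet ((g : ↥H) : X ≃ₜ X) ⊆ (U : Set X)),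
          varSet ((g : ↥H) : X ≃ₜ X)))
        ⊆ interior (closure (T : Set X)) := interior_mono (closure_mono hsub)
      _ = (T : Set X) := T.regular

section Final

variable {X₁ X₂ : Type*} [TopologicalSpace X₁] [TopologicalSpace X₂]
  [T3Space X₁] [T3Space X₂]
  {H₁ : Subgroup (X₁ ≃ₜ X₁)} {H₂ : Subgroup (X₂ ≃ₜ X₂)}

lemma isLUB_Psi (φ : ↥H₁ ≃* ↥H₂) (U : RegularOpens X₁) :
    IsLUB ((fun g : ↥H₁ => varRO ((φ g : ↥H₂) : X₂ ≃ₜ X₂)) ''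
      {g : ↥H₁ | varSet ((g : ↥H₁) : X₁ ≃ₜ X₁) ⊆ (U : Set X₁)}) (Psi φ U) := by
  constructor
  · rintro V ⟨g, hg, rfl⟩
    exact var_phi_subset_Psi φ hg
  · intro T hT
    rw [RegularOpens.le_iff, Psi_coe]
    unfold PsiSet
    have hsub : (⋃ (g : ↥H₁) (_ : varSet ((g : ↥H₁) : X₁ ≃ₜ X₁) ⊆ (U : Set X₁)),
        varSet ((φ g : ↥H₂) : X₂ ≃ₜ X₂)) ⊆ (T : Set X₂) := by
      apply Set.iUnion_subset
      intro g
      apply Set.iUnion_subset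
      intro hg
      exact hT ⟨g, hg, rfl⟩
    calc interior (closure (⋃ (g : ↥H₁) (_ : varSet ((g : ↥H₁) : X₁ ≃ₜ X₁) ⊆ (U : Set X₁)),
          varSet ((φ g : ↥H₂) : X₂ ≃ₜ X₂)))
        ⊆ interior (closure (T : Set X₂)) := interior_mono (closure_mono hsub)
      _ = (T : Set X₂) := T.regular

theorem rubin_main (h₁ : LocalMovementSystem H₁) (h₂ : LocalMovementSystem H₂)
    (φ : ↥H₁ ≃* ↥H₂) :
    ∃! ψ : RegularOpens X₁ ≃o RegularOpens X₂,
      ∀ (f : ↥H₁) (U V : RegularOpens X₁),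
        V = roImage (f : X₁ ≃ₜ X₁) U ↔ ψ V = roImage ((φ f : ↥H₂) : X₂ ≃ₜ X₂) (ψ U) := by
  refine ⟨psiIso h₁ h₂ φ, ?_, ?_⟩
  · intro f U V
    constructor
    · rintro rfl
      exact Psi_roImage h₁ h₂ φ f U
    · intro h
      apply (psiIso h₁ h₂ φ).injective
      rw [h]
      exact (Psi_roImage h₁ h₂ φ f U).symm
  · intro ψ' hcond
    have eqv : ∀ (f : ↥H₁) (U : RegularOpens X₁),
        ψ' (roImage ((f : ↥H₁) : X₁ ≃ₜ X₁) U) =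
          roImage ((φ f : ↥H₂) : X₂ ≃ₜ X₂) (ψ' U) :=
      fun f U => (hcond f U (roImage ((f : ↥H₁) : X₁ ≃ₜ X₁) U)).mp rfl
    have hvar : ∀ f : ↥H₁, ψ' (varRO ((f : ↥H₁) : X₁ ≃ₜ X₁)) =
        varRO ((φ f : ↥H₂) : X₂ ≃ₜ X₂) := by
      intro f
      have hiff : ∀ U : RegularOpens X₁,
          SmallP ((f : ↥H₁) : X₁ ≃ₜ X₁) U ↔ SmallP ((φ f : ↥H₂) : X₂ ≃ₜ X₂) (ψ' U) := by
        intro U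
        constructor
        · intro hs P₂ hd₂
          have hP₂ : P₂ = ψ' (ψ'.symm P₂) := (ψ'.apply_symm_apply P₂).symm
          rw [hP₂] at hd₂ ⊢
          have hd : Disjoint ((ψ'.symm P₂ : RegularOpens X₁) : Set X₁) (U : Set X₁) :=
            (orderIso_disjoint ψ').mp hd₂
          have h2 := hs (ψ'.symm P₂) hd
          rw [← eqv f (ψ'.symm P₂), h2]
        · intro hs P hd
          have hd₂ : Disjoint ((ψ' P : RegularOpens X₂) : Set X₂)
              ((ψ' U : RegularOpens X₂) : Set X₂) := (orderIso_disjoint ψ').mpr hd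
          have h2 := hs (ψ' P) hd₂
          rw [← eqv f P] at h2
          exact ψ'.injective h2
      have hL1 : IsLeast {U₂ : RegularOpens X₂ | SmallP ((φ f : ↥H₂) : X₂ ≃ₜ X₂) U₂}
          (ψ' (varRO ((f : ↥H₁) : X₁ ≃ₜ X₁))) := by
        constructor
        · exact (hiff _).mp (isLeast_small h₁ f).1
        · intro U₂ hU₂
          have hU : SmallP ((f : ↥H₁) : X₁ ≃ₜ X₁) (ψ'.symm U₂) := by
            apply (hiff (ψ'.symm U₂)).mpr
            rwa [ψ'.apply_symm_apply]
          have h2 := ψ'.monotone ((isLeast_small h₁ f).2 hU)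
          rwa [ψ'.apply_symm_apply] at h2
      exact hL1.unique (isLeast_small h₂ (φ f))
    apply OrderIso.ext
    funext U
    have h1 := isLUB_varFamily h₁ U
    have h2 : IsLUB (ψ' '' ((fun g : ↥H₁ => varRO ((g : ↥H₁) : X₁ ≃ₜ X₁)) ''
        {g : ↥H₁ | varSet ((g : ↥H₁) : X₁ ≃ₜ X₁) ⊆ (U : Set X₁)})) (ψ' U) := by
      rw [OrderIso.isLUB_image, OrderIso.symm_apply_apply]
      exact h1
    rw [Set.image_image] at h2
    have h3 : (fun g : ↥H₁ => ψ' (varRO ((g : ↥H₁) : X₁ ≃ₜ X₁))) =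
        (fun g : ↥H₁ => varRO ((φ g : ↥H₂) : X₂ ≃ₜ X₂)) := funext hvar
    rw [h3] at h2
    exact h2.unique (isLUB_Psi φ U)

end Final

theorem statement1 {X₁ X₂ : Type*} [TopologicalSpace X₁] [TopologicalSpace X₂]
    [T3Space X₁] [T3Space X₂]
    (H₁ : Subgroup (X₁ ≃ₜ X₁)) (H₂ : Subgroup (X₂ ≃ₜ X₂))
    (h₁ : LocalMovementSystem H₁) (h₂ : LocalMovementSystem H₂)
    (φ : H₁ ≃* H₂) :
    ∃! ψ : RegularOpens X₁ ≃o RegularOpens X₂,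
      ∀ (f : H₁) (U V : RegularOpens X₁),
        V = roImage (f : X₁ ≃ₜ X₁) U ↔ ψ V = roImage ((φ f : H₂) : X₂ ≃ₜ X₂) (ψ U) := by
  exact rubin_main h₁ h₂ φ

end Recon1
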